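/- In the EPG construction setup: let u and v be distinct vertices such that neither is an ancestor of the other, and suppose u is an internal vertex. Then (a) [l_x(u), p_x(u)] ∩ [l_x(v), p_x(v)] = ∅; and (b) if v ≠ a_0, then [l_x(u), max(p_x(u), q_x(u))] ∩ [l_x(v), max(p_x(v), q_x(v))] = ∅. -/
import Mathlib


open SimpleGraph Set Function

/-- `u` is an ancestor of `v` with respect to root `r`:
`u` lies on the unique path in `T` from `r` to `v`. -/
def IsAncestor {V : Type*} (T : SimpleGraph V) (r u v : V) : Prop :=
  ∀ p : T.Walk r v, p.IsPath → u ∈ p.support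

/-- `u` is the parent of `v` with respect to root `r`. -/
def IsParent {V : Type*} (T : SimpleGraph V) (r u v : V) : Prop :=
  IsAncestor T r u v ∧ u ≠ v ∧ T.Adj u v

/-- `L^r(u)`: the set of leaves of `T` that are descendants of `u`. -/
def LeafSet {V : Type*} (T : SimpleGraph V) [Fintype V] [DecidableRel T.Adj] (r u : V) :
    Set V :=
  {c | T.degree c = 1 ∧ IsAncestor T r u c}

/-- The leaf `c_{j mod k}` index. -/
def cidx {k : ℕ} (hk : 0 < k) (j : ℕ) : Fin k := ⟨j % k, Nat.mod_lt _ hk⟩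

/-- A set `A` of leaves is cyclically consecutive with respect to the enumeration `c`. -/
def CycConsec {V : Type*} {k : ℕ} (hk : 0 < k) (c : Fin k → V) (A : Set V) : Prop :=
  ∃ j m : ℕ, A = {x | ∃ t ≤ m, x = c (cidx hk (j + t))}


private lemma icc_disj {A B C D : ℝ} (hd : B < C ∨ D < A) :
    Set.Icc A B ∩ Set.Icc C D = ∅ := by
  rw [Set.eq_empty_iff_forall_notMem]
  rintro x ⟨⟨h1, h2⟩, h3, h4⟩
  rcases hd with hd | hd <;> linarith

private lemma takeUntil_or {V : Type*} [DecidableEq V] {G : SimpleGraph V} :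
    ∀ {x w : V} (p : G.Walk x w) (u v : V) (hu : u ∈ p.support) (hv : v ∈ p.support),
      u ∈ (p.takeUntil v hv).support ∨ v ∈ (p.takeUntil u hu).support
  | x, _, SimpleGraph.Walk.nil, u, v, hu, hv => by
      rw [SimpleGraph.Walk.mem_support_nil_iff] at hu hv
      subst hu; subst hv
      exact Or.inl (SimpleGraph.Walk.start_mem_support _)
  | x, w, SimpleGraph.Walk.cons h q, u, v, hu, hv => by
      by_cases hxv : x = v
      · subst hxv
        exact Or.inr (SimpleGraph.Walk.start_mem_support _)
      · by_cases hxu : x = u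
        · subst hxu
          exact Or.inl (SimpleGraph.Walk.start_mem_support _)
        · have hu' : u ∈ q.support := by
            rw [SimpleGraph.Walk.support_cons] at hu
            rcases List.mem_cons.mp hu with h1 | h1
            · exact absurd h1.symm hxu
            · exact h1
          have hv' : v ∈ q.support := by
            rw [SimpleGraph.Walk.support_cons] at hv
            rcases List.mem_cons.mp hv with h1 | h1
            · exact absurd h1.symm hxv
            · exact h1
          have e1 : (SimpleGraph.Walk.cons h q).takeUntil v hv
              = SimpleGraph.Walk.cons h (q.takeUntil v hv') := by
            simp only [SimpleGraph.Walk.takeUntil, dif_neg hxv]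
          have e2 : (SimpleGraph.Walk.cons h q).takeUntil u hu
              = SimpleGraph.Walk.cons h (q.takeUntil u hu') := by
            simp only [SimpleGraph.Walk.takeUntil, dif_neg hxu]
          rw [e1, e2, SimpleGraph.Walk.support_cons, SimpleGraph.Walk.support_cons]
          rcases takeUntil_or q u v hu' hv' with h1 | h1
          · exact Or.inl (List.mem_cons_of_mem _ h1)
          · exact Or.inr (List.mem_cons_of_mem _ h1)

/-- incomparable vertices, one of which is internal, have disjoint
horizontal extents. -/
theorem stmt15
    {V : Type*} [Fintype V] (T : SimpleGraph V) [DecidableRel T.Adj]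
    (hT : T.IsTree) {k : ℕ} (hk : 3 ≤ k) (a : Fin k → V)
    (hinj : Function.Injective a)
    (hleaf : ∀ v : V, T.degree v = 1 ↔ ∃ i : Fin k, v = a i)
    (r : V) (hr : 2 ≤ T.degree r)
    (hconsec : ∀ u : V, 2 ≤ T.degree u → ∃ s t : Fin k, s ≤ t ∧
        LeafSet T r u = {x | ∃ j : Fin k, s ≤ j ∧ j ≤ t ∧ x = a j})
    (hra0 : T.Adj r (a ⟨0, by omega⟩))
    (a' : V) (ha' : IsParent T r a' (a ⟨k - 1, by omega⟩))
    (ha'deg : T.degree a' = 2 ∨ a' = r)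
    (h : ℕ) (hmax : IsGreatest (Set.range fun u : V => T.dist r u) h)
    (lx px qx ly ry : V → ℝ)
    (hla : ∀ i : Fin k, 1 ≤ (i : ℕ) → (i : ℕ) ≤ k - 2 →
      lx (a i) = ((i : ℕ) : ℝ) ∧ px (a i) = ((i : ℕ) : ℝ) + 1 + (1/4 : ℝ) ∧
      qx (a i) = ((i : ℕ) : ℝ) + 3 * (1/4 : ℝ) ∧ ly (a i) = 0 ∧
      ry (a i) = (h : ℝ) - (T.dist r (a i) : ℝ) + 1)
    (ha0 : lx (a ⟨0, by omega⟩) = 0 ∧ px (a ⟨0, by omega⟩) = 1 + (1/4 : ℝ) ∧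
      qx (a ⟨0, by omega⟩) = (k : ℝ) - 1 + (1/4 : ℝ) ∧ ly (a ⟨0, by omega⟩) = 0 ∧
      ry (a ⟨0, by omega⟩) = (h : ℝ) + 1)
    (hak : lx (a ⟨k - 1, by omega⟩) = (k : ℝ) - 1 ∧
      px (a ⟨k - 1, by omega⟩) = (k : ℝ) + (1/4 : ℝ) ∧
      qx (a ⟨k - 1, by omega⟩) = (k : ℝ) - 1 + (1/4 : ℝ) ∧ ly (a ⟨k - 1, by omega⟩) = 0 ∧
      ry (a ⟨k - 1, by omega⟩) = (h : ℝ) + 1)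
    (hintv : ∀ v : V, 2 ≤ T.degree v → v ≠ r → v ≠ a' →
      lx v = sInf {x : ℝ | ∃ i : Fin k, a i ∈ LeafSet T r v ∧
          x = ((i : ℕ) : ℝ) + 2 * (1/4 : ℝ)} ∧
      px v = sSup {x : ℝ | ∃ i : Fin k, a i ∈ LeafSet T r v ∧
          x = ((i : ℕ) : ℝ) + 3 * (1/4 : ℝ)} ∧
      qx v = sInf {x : ℝ | ∃ i : Fin k, a i ∈ LeafSet T r v ∧
          x = ((i : ℕ) : ℝ) + 3 * (1/4 : ℝ)} ∧
      ly v = (h : ℝ) - (T.dist r v : ℝ) ∧ ry v = (h : ℝ) - (T.dist r v : ℝ) + 1)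
    (hane : a' ≠ r →
      (lx a' = (k : ℝ) - 1 + 2 * (1/4 : ℝ) ∧ px a' = (k : ℝ) - 1 + 3 * (1/4 : ℝ) ∧
        qx a' = (k : ℝ) - 1 + 3 * (1/4 : ℝ) ∧ ly a' = 0 ∧
        ry a' = (h : ℝ) - (T.dist r a' : ℝ) + 1) ∧
      (lx r = 2 * (1/4 : ℝ) ∧ px r = (k : ℝ) - 1 + 3 * (1/4 : ℝ) ∧ qx r = 1 ∧
        ly r = (h : ℝ) ∧ ry r = (h : ℝ) + 1))
    (haeq : a' = r →
      lx r = 2 * (1/4 : ℝ) ∧ px r = (k : ℝ) - 1 + 3 * (1/4 : ℝ) ∧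
      qx r = (k : ℝ) - 1 + (1/4 : ℝ) ∧ ly r = (h : ℝ) ∧ ry r = (h : ℝ) + 1)
    :
    ∀ u v : V, u ≠ v → 2 ≤ T.degree u →
      ¬ IsAncestor T r u v → ¬ IsAncestor T r v u →
      (Set.Icc (lx u) (px u) ∩ Set.Icc (lx v) (px v) = ∅) ∧
      (v ≠ a ⟨0, by omega⟩ →
        Set.Icc (lx u) (max (px u) (qx u)) ∩ Set.Icc (lx v) (max (px v) (qx v)) = ∅) := by
    classical
  have anc_r : ∀ v : V, IsAncestor T r r v := fun v p _ => p.start_mem_support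
  have huniq := hT.existsUnique_path
  have hPpath : ∀ v : V, ((huniq r v).choose).IsPath := fun v => (huniq r v).choose_spec.1
  have hPuniq : ∀ (v : V) (q : T.Walk r v), q.IsPath → q = (huniq r v).choose :=
    fun v q hq => (huniq r v).choose_spec.2 q hq
  have anc_iff : ∀ u v : V, IsAncestor T r u v ↔ u ∈ ((huniq r v).choose).support := by
    intro u v
    constructor
    · exact fun hh => hh _ (hPpath v)
    · intro hh q hq
      rw [hPuniq v q hq]; exact hh
  have comp : ∀ u v w : V, IsAncestor T r u w → IsAncestor T r v w →
      IsAncestor T r u v ∨ IsAncestor T r v u := by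
    intro u v w hu hv
    rw [anc_iff] at hu hv
    rcases takeUntil_or _ u v hu hv with hh | hh
    · left
      intro q hq
      rw [hPuniq v q hq, ← hPuniq v _ ((hPpath w).takeUntil hv)]
      exact hh
    · right
      intro q hq
      rw [hPuniq u q hq, ← hPuniq u _ ((hPpath w).takeUntil hu)]
      exact hh
  have hdeg1 : ∀ i : Fin k, T.degree (a i) = 1 := fun i => (hleaf _).2 ⟨i, rfl⟩
  have lmem : ∀ (w : V) (i : Fin k), a i ∈ LeafSet T r w ↔ IsAncestor T r w (a i) :=
    fun w i => ⟨fun hh => hh.2, fun hh => ⟨hdeg1 i, hh⟩⟩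
  have gen : ∀ w : V, 2 ≤ T.degree w → w ≠ r → w ≠ a' →
      ∃ s t : ℕ, s ≤ t ∧ t < k ∧
        lx w = (s : ℝ) + 2 * (1/4 : ℝ) ∧ px w = (t : ℝ) + 3 * (1/4 : ℝ) ∧
        qx w = (s : ℝ) + 3 * (1/4 : ℝ) ∧
        ∀ i : Fin k, (a i ∈ LeafSet T r w ↔ s ≤ (i : ℕ) ∧ (i : ℕ) ≤ t) := by
    intro w hw2 hwr hwa
    obtain ⟨s, t, hst, hL⟩ := hconsec w hw2
    obtain ⟨hl, hp, hq, -, -⟩ := hintv w hw2 hwr hwa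
    have hstn : (s : ℕ) ≤ (t : ℕ) := hst
    have hmem : ∀ i : Fin k,
        (a i ∈ LeafSet T r w ↔ (s : ℕ) ≤ (i : ℕ) ∧ (i : ℕ) ≤ (t : ℕ)) := by
      intro i
      rw [hL]
      constructor
      · rintro ⟨j, h1, h2, hj⟩
        cases hinj hj
        exact ⟨h1, h2⟩
      · rintro ⟨h1, h2⟩
        exact ⟨i, h1, h2, rfl⟩
    refine ⟨s, t, hstn, t.isLt, ?_, ?_, ?_, hmem⟩
    · rw [hl]
      apply IsLeast.csInf_eq
      constructor
      · exact ⟨s, (hmem s).2 ⟨le_rfl, hstn⟩, rfl⟩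
      · rintro x ⟨i, hi, rfl⟩
        have h1 := ((hmem i).1 hi).1
        have h2 : ((s : ℕ) : ℝ) ≤ ((i : ℕ) : ℝ) := by exact_mod_cast h1
        linarith
    · rw [hp]
      apply IsGreatest.csSup_eq
      constructor
      · exact ⟨t, (hmem t).2 ⟨hstn, le_rfl⟩, rfl⟩
      · rintro x ⟨i, hi, rfl⟩
        have h1 := ((hmem i).1 hi).2
        have h2 : ((i : ℕ) : ℝ) ≤ ((t : ℕ) : ℝ) := by exact_mod_cast h1
        linarith
    · rw [hq]
      apply IsLeast.csInf_eq
      constructor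
      · exact ⟨s, (hmem s).2 ⟨le_rfl, hstn⟩, rfl⟩
      · rintro x ⟨i, hi, rfl⟩
        have h1 := ((hmem i).1 hi).1
        have h2 : ((s : ℕ) : ℝ) ≤ ((i : ℕ) : ℝ) := by exact_mod_cast h1
        linarith
  intro u v huv hu2 hAuv hAvu
  have hur : u ≠ r := fun e => hAuv (e ▸ anc_r v)
  have hvr : v ≠ r := fun e => hAvu (e ▸ anc_r u)
  have hk3 : (3 : ℝ) ≤ (k : ℝ) := by exact_mod_cast hk
  have hvdeg : T.degree v = 1 ∨ 2 ≤ T.degree v := by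
    rcases Nat.lt_or_ge (T.degree v) 2 with hlt | hge
    · left
      have hpos : 0 < T.degree v := by
        obtain ⟨p⟩ := hT.isConnected.preconnected v r
        cases p with
        | nil => exact absurd rfl hvr
        | cons hadj _ => exact (T.degree_pos_iff_exists_adj v).mpr ⟨_, hadj⟩
      omega
    · right; exact hge
  by_cases hua : u = a'
  · subst hua
    have har : u ≠ r := hur
    obtain ⟨⟨hl1, hp1, hq1, -, -⟩, -⟩ := hane har
    have hvb : px v ≤ (k : ℝ) - 3/4 ∧
        (v ≠ a ⟨0, by omega⟩ → qx v ≤ (k : ℝ) - 3/4) := by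
      rcases hvdeg with h1 | h1
      · obtain ⟨i, rfl⟩ := (hleaf v).1 h1
        have hikk : (i : ℕ) < k := i.isLt
        have hik : (i : ℕ) ≠ k - 1 := by
          intro e
          apply hAuv
          have he : a i = a ⟨k - 1, by omega⟩ := congrArg a (Fin.ext (by simpa using e))
          rw [he]
          exact ha'.1
        by_cases hi0 : (i : ℕ) = 0
        · have e0 : a i = a ⟨0, by omega⟩ := congrArg a (Fin.ext (by simpa using hi0))
          constructor
          · rw [e0, ha0.2.1]; linarith
          · intro hne; exact absurd e0 hne
        · have h1i : 1 ≤ (i : ℕ) := by omega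
          have h2i : (i : ℕ) ≤ k - 2 := by omega
          obtain ⟨-, hpi, hqi, -, -⟩ := hla i h1i h2i
          have hle : ((i : ℕ) : ℝ) ≤ (k : ℝ) - 2 := by
            have h2 : (i : ℕ) + 2 ≤ k := by omega
            have h3 := (Nat.cast_le (α := ℝ)).mpr h2
            push_cast at h3
            linarith
          constructor
          · rw [hpi]; linarith
          · intro _; rw [hqi]; linarith
      · have hva : v ≠ u := fun e => huv e.symm
        obtain ⟨sv, tv, hsv, htvk, hlv, hpv, hqv, hmv⟩ := gen v h1 hvr hva
        have htv2 : tv ≤ k - 2 := by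
          by_contra hcc
          have htv : tv = k - 1 := by omega
          have hmem : a ⟨tv, htvk⟩ ∈ LeafSet T r v := (hmv _).2 ⟨hsv, le_rfl⟩
          have e : a ⟨tv, htvk⟩ = a ⟨k - 1, by omega⟩ :=
            congrArg a (Fin.ext (by simpa using htv))
          have hanc : IsAncestor T r v (a ⟨k - 1, by omega⟩) := e ▸ (lmem v _).1 hmem
          rcases comp v u _ hanc ha'.1 with hc | hc
          · exact hAvu hc
          · exact hAuv hc
        have htv2' : (tv : ℝ) ≤ (k : ℝ) - 2 := by
          have h2 : tv + 2 ≤ k := by omega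
          have h3 := (Nat.cast_le (α := ℝ)).mpr h2
          push_cast at h3
          linarith
        have hsv2' : ((sv : ℕ) : ℝ) ≤ (tv : ℝ) := by exact_mod_cast hsv
        constructor
        · rw [hpv]; linarith
        · intro _; rw [hqv]; linarith
    constructor
    · rw [hl1]
      apply icc_disj
      right
      linarith [hvb.1]
    · intro hv0
      rw [hl1, hp1, hq1, max_self]
      apply icc_disj
      right
      have h2 := hvb.2 hv0
      exact lt_of_le_of_lt (max_le hvb.1 h2) (by linarith)
  · obtain ⟨su, tu, hsu, htuk, hlu, hpu, hqu, hmu⟩ := gen u hu2 hur hua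
    have hsu' : ((su : ℕ) : ℝ) ≤ (tu : ℝ) := by exact_mod_cast hsu
    have hmaxu : max (px u) (qx u) = px u := by
      rw [hpu, hqu]
      apply max_eq_left
      linarith
    rcases hvdeg with h1 | h1
    · obtain ⟨i, rfl⟩ := (hleaf v).1 h1
      have hnm : ¬ (su ≤ (i : ℕ) ∧ (i : ℕ) ≤ tu) :=
        fun hc => hAuv ((lmem u i).1 ((hmu i).2 hc))
      have hikk : (i : ℕ) < k := i.isLt
      by_cases hi0 : (i : ℕ) = 0
      · have e0 : a i = a ⟨0, by omega⟩ := congrArg a (Fin.ext (by simpa using hi0))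
        have hsu1 : 1 ≤ su := by omega
        have hsu1' : (1 : ℝ) ≤ (su : ℝ) := by exact_mod_cast hsu1
        constructor
        · rw [hlu, e0, ha0.1, ha0.2.1]
          apply icc_disj
          right
          linarith
        · intro hv0
          exact absurd e0 hv0
      · by_cases hik : (i : ℕ) = k - 1
        · have ek : a i = a ⟨k - 1, by omega⟩ := congrArg a (Fin.ext (by simpa using hik))
          have htu2 : tu ≤ k - 2 := by omega
          have htu2' : (tu : ℝ) ≤ (k : ℝ) - 2 := by
            have h2 : tu + 2 ≤ k := by omega
            have h3 := (Nat.cast_le (α := ℝ)).mpr h2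
            push_cast at h3
            linarith
          constructor
          · rw [hpu, ek, hak.1]
            apply icc_disj
            left
            linarith
          · intro _
            rw [hmaxu, hpu, ek, hak.1]
            apply icc_disj
            left
            linarith
        · have h1i : 1 ≤ (i : ℕ) := by omega
          have h2i : (i : ℕ) ≤ k - 2 := by omega
          obtain ⟨hli, hpi, hqi, -, -⟩ := hla i h1i h2i
          rcases (by omega : (i : ℕ) < su ∨ tu < (i : ℕ)) with hc | hc
          · have hc' : ((i : ℕ) : ℝ) + 1 ≤ (su : ℝ) := by
              have := Nat.succ_le_of_lt hc
              exact_mod_cast this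
            constructor
            · rw [hlu, hpi]
              apply icc_disj
              right
              linarith
            · intro _
              rw [hlu, hpi, hqi]
              apply icc_disj
              right
              have hmle : ((i : ℕ) : ℝ) + 3 * (1/4) ≤ ((i : ℕ) : ℝ) + 1 + (1/4) := by linarith
              rw [max_eq_left hmle]
              linarith
          · have hc' : (tu : ℝ) + 1 ≤ ((i : ℕ) : ℝ) := by
              have := Nat.succ_le_of_lt hc
              exact_mod_cast this
            constructor
            · rw [hpu, hli]
              apply icc_disj
              left
              linarith
            · intro _
              rw [hmaxu, hpu, hli]
              apply icc_disj
              left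
              linarith
    · by_cases hva : v = a'
      · subst hva
        have har : v ≠ r := hvr
        obtain ⟨⟨hl1, hp1, hq1, -, -⟩, -⟩ := hane har
        have htu2 : tu ≤ k - 2 := by
          by_contra hcc
          have htv : tu = k - 1 := by omega
          have hmem : a ⟨tu, htuk⟩ ∈ LeafSet T r u := (hmu _).2 ⟨hsu, le_rfl⟩
          have e : a ⟨tu, htuk⟩ = a ⟨k - 1, by omega⟩ :=
            congrArg a (Fin.ext (by simpa using htv))
          have hanc : IsAncestor T r u (a ⟨k - 1, by omega⟩) := e ▸ (lmem u _).1 hmem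
          rcases comp u v _ hanc ha'.1 with hc | hc
          · exact hAuv hc
          · exact hAvu hc
        have htu2' : (tu : ℝ) ≤ (k : ℝ) - 2 := by
          have h2 : tu + 2 ≤ k := by omega
          have h3 := (Nat.cast_le (α := ℝ)).mpr h2
          push_cast at h3
          linarith
        constructor
        · rw [hpu, hl1]
          apply icc_disj
          left
          linarith
        · intro _
          rw [hmaxu, hpu, hl1]
          apply icc_disj
          left
          linarith
      · obtain ⟨sv, tv, hsv, htvk, hlv, hpv, hqv, hmv⟩ := gen v h1 hvr hva
        have hsv' : ((sv : ℕ) : ℝ) ≤ (tv : ℝ) := by exact_mod_cast hsv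
        have hdisj : tu < sv ∨ tv < su := by
          by_contra hcc
          push_neg at hcc
          obtain ⟨hc1, hc2⟩ := hcc
          have hjtu : max su sv ≤ tu := max_le hsu hc1
          have hjtv : max su sv ≤ tv := max_le hc2 hsv
          have hjk : max su sv < k := lt_of_le_of_lt hjtu htuk
          have hmu' : a ⟨max su sv, hjk⟩ ∈ LeafSet T r u :=
            (hmu _).2 ⟨le_max_left _ _, hjtu⟩
          have hmv' : a ⟨max su sv, hjk⟩ ∈ LeafSet T r v :=
            (hmv _).2 ⟨le_max_right _ _, hjtv⟩
          rcases comp u v _ ((lmem u _).1 hmu') ((lmem v _).1 hmv') with hc | hc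
          · exact hAuv hc
          · exact hAvu hc
        have hmaxv : max (px v) (qx v) = px v := by
          rw [hpv, hqv]
          apply max_eq_left
          linarith
        rcases hdisj with hc | hc
        · have hc' : (tu : ℝ) + 1 ≤ (sv : ℝ) := by
            have := Nat.succ_le_of_lt hc
            exact_mod_cast this
          constructor
          · rw [hpu, hlv]
            apply icc_disj
            left
            linarith
          · intro _
            rw [hmaxu, hpu, hlv]
            apply icc_disj
            left
            linarith
        · have hc' : (tv : ℝ) + 1 ≤ (su : ℝ) := by
            have := Nat.succ_le_of_lt hc
            exact_mod_cast this
          constructor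
          · rw [hlu, hpv]
            apply icc_disj
            right
            linarith
          · intro _
            rw [hlu, hmaxv, hpv]
            apply icc_disj
            right
            linarith
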